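/- Let m, n ≥ 1 with m + n ≥ 3, and let e be any edge of the complete bipartite graph K_{m,n}. Then γst(K_{m,n} − e) = γst((K_{m,n})_e). -/

import Mathlib

open SimpleGraph

/-- The degree of a vertex, as the cardinality of its neighbor set. -/
noncomputable def sdeg {V : Type*} (G : SimpleGraph V) (v : V) : ℕ :=
  (G.neighborSet v).ncard

/-- `D` is a strong dominating set of `G` if every vertex outside `D` has a neighbor
in `D` of at least the same degree. -/
def IsStrongDominatingSet {V : Type*} (G : SimpleGraph V) (D : Set V) : Prop :=
  ∀ x ∉ D, ∃ y ∈ D, G.Adj x y ∧ sdeg G x ≤ sdeg G y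

/-- The strong domination number: minimum cardinality of a strong dominating set. -/
noncomputable def strongDominationNumber {V : Type*} (G : SimpleGraph V) : ℕ :=
  sInf {n | ∃ D : Set V, IsStrongDominatingSet G D ∧ D.ncard = n}

/-- Subdivision of the edge `uv` of `G`: delete `uv`, add a new vertex `none`
adjacent to `u` and `v`. -/
def subdivide {V : Type*} (G : SimpleGraph V) (u v : V) : SimpleGraph (Option V) :=
  SimpleGraph.fromRel (fun a b =>
    match a, b with
    | some x, some y => G.Adj x y ∧ ¬(s(x, y) = s(u, v))
    | some x, none => x = u ∨ x = v
    | none, some _ => False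
    | none, none => False)

/-- Contraction of the edge `uv` of `G`: the vertex `u` plays the role of the merged
vertex, and `v` is removed. -/
def contractEdge {V : Type*} (G : SimpleGraph V) (u v : V) :
    SimpleGraph {x : V // x ≠ v} :=
  SimpleGraph.fromRel (fun a b =>
    G.Adj a.1 b.1 ∨ (a.1 = u ∧ G.Adj v b.1) ∨ (b.1 = u ∧ G.Adj a.1 v))

/-- The corona product `G1 ∘ G2`: one copy of `G1` together with one copy of `G2`
for each vertex `i` of `G1`, where `i` is joined to all vertices of its copy. -/
def corona {V1 V2 : Type*} (G1 : SimpleGraph V1) (G2 : SimpleGraph V2) :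
    SimpleGraph (V1 ⊕ V1 × V2) :=
  SimpleGraph.fromRel (fun a b =>
    match a, b with
    | .inl a, .inl b => G1.Adj a b
    | .inl a, .inr (i, _) => a = i
    | .inr _, .inl _ => False
    | .inr (i, x), .inr (j, y) => i = j ∧ G2.Adj x y)

/-- The `k`-subdivision `G^{1/k}` of `G`: every edge is replaced by a path of length
`k`, the internal vertices of the path replacing `e` being indexed by `e` and a
position in `Fin (k-1)` (an orientation of `e` is chosen via `Quot.out`). -/
noncomputable def kSubdivision {V : Type*} (G : SimpleGraph V) (k : ℕ) :
    SimpleGraph (V ⊕ G.edgeSet × Fin (k - 1)) :=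
  SimpleGraph.fromRel (fun a b =>
    match a, b with
    | .inl x, .inl y => k ≤ 1 ∧ G.Adj x y
    | .inl x, .inr (e, i) =>
        (x = (Quot.out (e : Sym2 V)).1 ∧ (i : ℕ) = 0) ∨
        (x = (Quot.out (e : Sym2 V)).2 ∧ (i : ℕ) = k - 2)
    | .inr _, .inl _ => False
    | .inr (e, i), .inr (f, j) => e = f ∧ (j : ℕ) = (i : ℕ) + 1)

/-! Both numbers are computed explicitly; swapping the two sides of `K_{m,n}` is an isomorphism
of both graphs, so we may assume `m ≤ n`. If `m = 1` or `m = n`, both numbers are `2`: neither graph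
has a vertex adjacent to all others, so one vertex never suffices, while the two endpoints of `e`
(or, in `K_{m,n} - e` with `m = n`, two vertices away from `e`) do. If `2 ≤ m < n`, both numbers
are `m`: the side of size `m` is a strong dominating set, and each of its vertices (in
`K_{m,n} - e`, each but the endpoint of `e`) has larger degree than all its neighbours, hence lies
in every strong dominating set; in `K_{m,n} - e` dominating that endpoint costs one more vertex. -/

section StrongDomination

variable {V W : Type*} {G : SimpleGraph V} {G' : SimpleGraph W} {D : Set V}

theorem isStrongDominatingSet_univ (G : SimpleGraph V) : IsStrongDominatingSet G Set.univ :=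
  fun _ hx => absurd (Set.mem_univ _) hx

theorem strongDominationNumber_le_ncard (hD : IsStrongDominatingSet G D) :
    strongDominationNumber G ≤ D.ncard :=
  Nat.sInf_le ⟨D, hD, rfl⟩

theorem exists_isStrongDominatingSet_ncard_eq (G : SimpleGraph V) :
    ∃ D, IsStrongDominatingSet G D ∧ D.ncard = strongDominationNumber G :=
  Nat.sInf_mem (s := {n | ∃ D : Set V, IsStrongDominatingSet G D ∧ D.ncard = n})
    ⟨_, Set.univ, isStrongDominatingSet_univ G, rfl⟩

theorem le_strongDominationNumber {k : ℕ}
    (h : ∀ D, IsStrongDominatingSet G D → k ≤ D.ncard) : k ≤ strongDominationNumber G := by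
  obtain ⟨D, hD, hDk⟩ := exists_isStrongDominatingSet_ncard_eq G
  exact hDk ▸ h D hD

theorem SimpleGraph.Iso.sdeg_eq (e : G ≃g G') (v : V) : sdeg G' (e v) = sdeg G v :=
  (Set.ncard_congr' (e.mapNeighborSet v)).symm

namespace IsStrongDominatingSet

theorem exists_mem_eq_or_adj (hD : IsStrongDominatingSet G D) (x : V) :
    ∃ y ∈ D, x = y ∨ G.Adj x y := by
  by_cases hx : x ∈ D
  · exact ⟨x, hx, .inl rfl⟩
  · obtain ⟨y, hy, hxy, -⟩ := hD x hx
    exact ⟨y, hy, .inr hxy⟩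

theorem mem_of_forall_adj_sdeg_lt (hD : IsStrongDominatingSet G D) {x : V}
    (hx : ∀ y, G.Adj x y → sdeg G y < sdeg G x) : x ∈ D := by
  by_contra hxD
  obtain ⟨y, -, hxy, hle⟩ := hD x hxD
  exact (hx y hxy).not_ge hle

theorem two_le_ncard [Finite V] [Nonempty V] (hD : IsStrongDominatingSet G D)
    (h : ∀ z, ∃ x ≠ z, ¬G.Adj x z) : 2 ≤ D.ncard := by
  by_contra! hD1
  obtain ⟨z, hz⟩ := (Set.ncard_le_one_iff_subset_singleton).mp (Nat.le_of_lt_succ hD1)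
  obtain ⟨x, hxz, hx⟩ := h z
  obtain ⟨y, hy, hxy, -⟩ := hD x fun hxD => hxz (hz hxD)
  exact hx (hz hy ▸ hxy)

theorem image_iso (hD : IsStrongDominatingSet G D) (e : G ≃g G') :
    IsStrongDominatingSet G' (e '' D) := by
  intro x' hx'
  obtain ⟨x, rfl⟩ := e.surjective x'
  obtain ⟨y, hy, hxy, hle⟩ := hD x fun hx => hx' ⟨x, hx, rfl⟩
  refine ⟨e y, ⟨y, hy, rfl⟩, e.map_adj_iff.mpr hxy, ?_⟩
  rwa [e.sdeg_eq, e.sdeg_eq]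

end IsStrongDominatingSet

theorem SimpleGraph.Iso.strongDominationNumber_le (e : G ≃g G') :
    strongDominationNumber G' ≤ strongDominationNumber G := by
  obtain ⟨D, hD, hDk⟩ := exists_isStrongDominatingSet_ncard_eq G
  calc strongDominationNumber G' ≤ (e '' D).ncard :=
        strongDominationNumber_le_ncard (hD.image_iso e)
    _ = strongDominationNumber G := by rw [Set.ncard_image_of_injective _ e.injective, hDk]

theorem SimpleGraph.Iso.strongDominationNumber_eq (e : G ≃g G') :
    strongDominationNumber G = strongDominationNumber G' :=
  le_antisymm e.symm.strongDominationNumber_le e.strongDominationNumber_le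

theorem subdivide_comm (G : SimpleGraph V) (u v : V) : subdivide G u v = subdivide G v u := by
  ext (_ | x) (_ | y) <;> simp [subdivide, Sym2.eq_swap (a := u)] <;> tauto

end StrongDomination

section CompleteBipartite

variable {α β : Type*} (a₀ : α) (b₀ : β)

def completeBipartiteDeleteEdge : SimpleGraph (α ⊕ β) :=
  (completeBipartiteGraph α β).deleteEdges {s(.inl a₀, .inr b₀)}

def completeBipartiteSubdivide : SimpleGraph (Option (α ⊕ β)) :=
  subdivide (completeBipartiteGraph α β) (.inl a₀) (.inr b₀)

variable {a₀ b₀} {a a' : α} {b b' : β} {x : α ⊕ β}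

namespace completeBipartiteDeleteEdge

@[simp] theorem adj_inl_inr :
    (completeBipartiteDeleteEdge a₀ b₀).Adj (.inl a) (.inr b) ↔ ¬(a = a₀ ∧ b = b₀) := by
  simp [completeBipartiteDeleteEdge]

@[simp] theorem adj_inr_inl :
    (completeBipartiteDeleteEdge a₀ b₀).Adj (.inr b) (.inl a) ↔ ¬(a = a₀ ∧ b = b₀) := by
  rw [adj_comm, adj_inl_inr]

@[simp] theorem not_adj_inl_inl : ¬(completeBipartiteDeleteEdge a₀ b₀).Adj (.inl a) (.inl a') := by
  simp [completeBipartiteDeleteEdge]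

@[simp] theorem not_adj_inr_inr : ¬(completeBipartiteDeleteEdge a₀ b₀).Adj (.inr b) (.inr b') := by
  simp [completeBipartiteDeleteEdge]

def swapIso : completeBipartiteDeleteEdge a₀ b₀ ≃g completeBipartiteDeleteEdge b₀ a₀ where
  toEquiv := Equiv.sumComm α β
  map_rel_iff' {x y} := by
    rcases x with a | b <;> rcases y with a' | b' <;> simp [and_comm]

theorem sdeg_inl_self : sdeg (completeBipartiteDeleteEdge a₀ b₀) (.inl a₀) = Nat.card β - 1 := by
  have hN : (completeBipartiteDeleteEdge a₀ b₀).neighborSet (.inl a₀) =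
      Set.range Sum.inr \ {.inr b₀} := by
    ext (a | b) <;> simp [mem_neighborSet]
  rw [sdeg, hN, Set.ncard_sdiff_singleton_of_mem (Set.mem_range_self b₀),
    Set.ncard_range_of_injective Sum.inr_injective]

theorem sdeg_inl_of_ne (ha : a ≠ a₀) :
    sdeg (completeBipartiteDeleteEdge a₀ b₀) (.inl a) = Nat.card β := by
  have hN : (completeBipartiteDeleteEdge a₀ b₀).neighborSet (.inl a) = Set.range Sum.inr := by
    ext (a | b) <;> simp [mem_neighborSet, ha]
  rw [sdeg, hN, Set.ncard_range_of_injective Sum.inr_injective]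

theorem sdeg_inr_self : sdeg (completeBipartiteDeleteEdge a₀ b₀) (.inr b₀) = Nat.card α - 1 :=
  (swapIso.sdeg_eq (.inl b₀)).trans sdeg_inl_self

theorem sdeg_inr_of_ne (hb : b ≠ b₀) :
    sdeg (completeBipartiteDeleteEdge a₀ b₀) (.inr b) = Nat.card α :=
  (swapIso.sdeg_eq (.inl b)).trans (sdeg_inl_of_ne hb)

theorem sdeg_inl_le (a : α) : sdeg (completeBipartiteDeleteEdge a₀ b₀) (.inl a) ≤ Nat.card β := by
  by_cases ha : a = a₀
  · rw [ha, sdeg_inl_self]; exact Nat.sub_le _ _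
  · rw [sdeg_inl_of_ne ha]

theorem sdeg_inr_le (b : β) : sdeg (completeBipartiteDeleteEdge a₀ b₀) (.inr b) ≤ Nat.card α :=
  (swapIso.sdeg_eq (.inl b)).trans_le (sdeg_inl_le b)

theorem exists_ne_not_adj (z : α ⊕ β) :
    ∃ x ≠ z, ¬(completeBipartiteDeleteEdge a₀ b₀).Adj x z := by
  rcases z with a | b
  · by_cases ha : a = a₀
    · exact ⟨.inr b₀, Sum.inr_ne_inl, by simp [ha]⟩
    · exact ⟨.inl a₀, by simpa [eq_comm] using ha, by simp⟩
  · by_cases hb : b = b₀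
    · exact ⟨.inl a₀, Sum.inl_ne_inr, by simp [hb]⟩
    · exact ⟨.inr b₀, by simpa [eq_comm] using hb, by simp⟩

end completeBipartiteDeleteEdge

namespace completeBipartiteSubdivide

@[simp] theorem adj_inl_inr :
    (completeBipartiteSubdivide a₀ b₀).Adj (some (.inl a)) (some (.inr b)) ↔
      ¬(a = a₀ ∧ b = b₀) := by
  simp [completeBipartiteSubdivide, subdivide, imp_not_comm]

@[simp] theorem adj_inr_inl :
    (completeBipartiteSubdivide a₀ b₀).Adj (some (.inr b)) (some (.inl a)) ↔
      ¬(a = a₀ ∧ b = b₀) := by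
  rw [adj_comm, adj_inl_inr]

@[simp] theorem not_adj_inl_inl :
    ¬(completeBipartiteSubdivide a₀ b₀).Adj (some (.inl a)) (some (.inl a')) := by
  simp [completeBipartiteSubdivide, subdivide]

@[simp] theorem not_adj_inr_inr :
    ¬(completeBipartiteSubdivide a₀ b₀).Adj (some (.inr b)) (some (.inr b')) := by
  simp [completeBipartiteSubdivide, subdivide]

@[simp] theorem adj_none_some :
    (completeBipartiteSubdivide a₀ b₀).Adj none (some x) ↔ x = .inl a₀ ∨ x = .inr b₀ := by
  simp [completeBipartiteSubdivide, subdivide]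

@[simp] theorem adj_some_none :
    (completeBipartiteSubdivide a₀ b₀).Adj (some x) none ↔ x = .inl a₀ ∨ x = .inr b₀ := by
  rw [adj_comm, adj_none_some]

def swapIso : completeBipartiteSubdivide a₀ b₀ ≃g completeBipartiteSubdivide b₀ a₀ where
  toEquiv := (Equiv.sumComm α β).optionCongr
  map_rel_iff' {x y} := by
    rcases x with _ | a | b <;> rcases y with _ | a' | b' <;> simp [and_comm, or_comm]

theorem sdeg_none : sdeg (completeBipartiteSubdivide a₀ b₀) none = 2 := by
  have hN : (completeBipartiteSubdivide a₀ b₀).neighborSet none =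
      {some (.inl a₀), some (.inr b₀)} := by
    ext (_ | a | b) <;> simp [mem_neighborSet]
  rw [sdeg, hN, Set.ncard_pair (by simp)]

theorem sdeg_inl : sdeg (completeBipartiteSubdivide a₀ b₀) (some (.inl a)) = Nat.card β := by
  have hinj : Function.Injective (some ∘ Sum.inr : β → Option (α ⊕ β)) :=
    (Option.some_injective _).comp Sum.inr_injective
  rw [sdeg, ← Set.ncard_range_of_injective hinj]
  by_cases ha : a = a₀
  · -- subdividing exchanges the neighbour `b₀` of `a₀` for the new vertex
    have hN : (completeBipartiteSubdivide a₀ b₀).neighborSet (some (.inl a)) =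
        insert none (Set.range (some ∘ Sum.inr) \ {some (.inr b₀)}) := by
      ext (_ | a | b) <;> simp [mem_neighborSet, ha]
    rw [hN]
    exact Set.ncard_exchange (by simp) (Set.mem_range_self b₀)
  · have hN : (completeBipartiteSubdivide a₀ b₀).neighborSet (some (.inl a)) =
        Set.range (some ∘ Sum.inr) := by
      ext (_ | a | b) <;> simp [mem_neighborSet, ha]
    rw [hN]

theorem sdeg_inr : sdeg (completeBipartiteSubdivide a₀ b₀) (some (.inr b)) = Nat.card α :=
  (swapIso.sdeg_eq (some (.inl b))).trans sdeg_inl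

end completeBipartiteSubdivide

end CompleteBipartite

section DominationNumber

variable {α β : Type*} [Finite α] [Finite β] {a₀ : α} {b₀ : β}

namespace completeBipartiteDeleteEdge

theorem two_le_strongDominationNumber :
    2 ≤ strongDominationNumber (completeBipartiteDeleteEdge a₀ b₀) :=
  le_strongDominationNumber fun _ hD =>
    have : Nonempty (α ⊕ β) := ⟨.inl a₀⟩
    hD.two_le_ncard exists_ne_not_adj

theorem strongDominationNumber_eq_two_of_card_eq_one (hα : Nat.card α = 1)
    (hβ : 2 ≤ Nat.card β) : strongDominationNumber (completeBipartiteDeleteEdge a₀ b₀) = 2 := by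
  have : Subsingleton α := Finite.card_le_one_iff_subsingleton.mp hα.le
  refine le_antisymm ?_ two_le_strongDominationNumber
  have hD : IsStrongDominatingSet (completeBipartiteDeleteEdge a₀ b₀) {.inl a₀, .inr b₀} := by
    rintro (a | b) hx
    · exact absurd (by simp [Subsingleton.elim a a₀]) hx
    · have hb : b ≠ b₀ := by rintro rfl; simp at hx
      refine ⟨.inl a₀, by simp, by simp [hb], ?_⟩
      rw [sdeg_inr_of_ne hb, sdeg_inl_self]
      omega
  exact (strongDominationNumber_le_ncard hD).trans_eq (Set.ncard_pair Sum.inl_ne_inr)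

theorem strongDominationNumber_eq_two_of_card_eq (h : Nat.card α = Nat.card β)
    (hα : 2 ≤ Nat.card α) : strongDominationNumber (completeBipartiteDeleteEdge a₀ b₀) = 2 := by
  have : Nontrivial α := Finite.one_lt_card_iff_nontrivial.mp hα
  have : Nontrivial β := Finite.one_lt_card_iff_nontrivial.mp (h ▸ hα)
  obtain ⟨a₁, ha₁⟩ := exists_ne a₀
  obtain ⟨b₁, hb₁⟩ := exists_ne b₀
  refine le_antisymm ?_ two_le_strongDominationNumber
  have hD : IsStrongDominatingSet (completeBipartiteDeleteEdge a₀ b₀) {.inl a₁, .inr b₁} := by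
    rintro (a | b) -
    · refine ⟨.inr b₁, by simp, by simp [hb₁], ?_⟩
      rw [sdeg_inr_of_ne hb₁, h]
      exact sdeg_inl_le a
    · refine ⟨.inl a₁, by simp, by simp [ha₁], ?_⟩
      rw [sdeg_inl_of_ne ha₁, ← h]
      exact sdeg_inr_le b
  exact (strongDominationNumber_le_ncard hD).trans_eq (Set.ncard_pair Sum.inl_ne_inr)

theorem strongDominationNumber_eq_card (hα : 2 ≤ Nat.card α) (h : Nat.card α < Nat.card β) :
    strongDominationNumber (completeBipartiteDeleteEdge a₀ b₀) = Nat.card α := by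
  have : Nontrivial α := Finite.one_lt_card_iff_nontrivial.mp hα
  obtain ⟨a₁, ha₁⟩ := exists_ne a₀
  refine le_antisymm ?_ (le_strongDominationNumber fun D hD => ?_)
  · have hD : IsStrongDominatingSet (completeBipartiteDeleteEdge a₀ b₀) (Set.range Sum.inl) := by
      rintro (a | b) hx
      · exact absurd (Set.mem_range_self a) hx
      · refine ⟨.inl a₁, Set.mem_range_self a₁, by simp [ha₁], ?_⟩
        rw [sdeg_inl_of_ne ha₁]
        exact (sdeg_inr_le b).trans h.le
    exact (strongDominationNumber_le_ncard hD).trans_eq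
      (Set.ncard_range_of_injective Sum.inl_injective)
  · have hforced : Sum.inl '' {a₀}ᶜ ⊆ D := by
      rintro _ ⟨a, ha, rfl⟩
      refine hD.mem_of_forall_adj_sdeg_lt fun y hy => ?_
      rcases y with a' | b
      · simp at hy
      · rw [sdeg_inl_of_ne ha]
        exact (sdeg_inr_le b).trans_lt h
    obtain ⟨y, hyD, hy⟩ := hD.exists_mem_eq_or_adj (.inl a₀)
    have hy' : y ∉ Sum.inl '' {a₀}ᶜ := by
      rintro ⟨a, ha, rfl⟩
      rcases hy with hy | hy
      · exact ha (Sum.inl_injective hy).symm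
      · simp at hy
    calc Nat.card α = (insert y (Sum.inl '' {a₀}ᶜ)).ncard := by
          rw [Set.ncard_insert_of_notMem hy', Set.ncard_image_of_injective _ Sum.inl_injective,
            Set.ncard_compl, Set.ncard_singleton]
          omega
      _ ≤ D.ncard := Set.ncard_le_ncard (Set.insert_subset hyD hforced)

end completeBipartiteDeleteEdge

namespace completeBipartiteSubdivide

theorem exists_ne_not_adj (h : 3 ≤ Nat.card α + Nat.card β) (z : Option (α ⊕ β)) :
    ∃ x ≠ z, ¬(completeBipartiteSubdivide a₀ b₀).Adj x z := by
  rcases z with _ | a | b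
  · rcases le_or_gt 2 (Nat.card α) with hα | hα
    · have : Nontrivial α := Finite.one_lt_card_iff_nontrivial.mp hα
      obtain ⟨a₁, ha₁⟩ := exists_ne a₀
      exact ⟨some (.inl a₁), Option.some_ne_none _, by simp [ha₁]⟩
    · have : Nontrivial β := Finite.one_lt_card_iff_nontrivial.mp (by omega)
      obtain ⟨b₁, hb₁⟩ := exists_ne b₀
      exact ⟨some (.inr b₁), Option.some_ne_none _, by simp [hb₁]⟩
  · by_cases ha : a = a₀
    · exact ⟨some (.inr b₀), by simp, by simp [ha]⟩
    · exact ⟨none, (Option.some_ne_none _).symm, by simp [ha]⟩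
  · by_cases hb : b = b₀
    · exact ⟨some (.inl a₀), by simp, by simp [hb]⟩
    · exact ⟨none, (Option.some_ne_none _).symm, by simp [hb]⟩

theorem strongDominationNumber_eq_two (h : 3 ≤ Nat.card α + Nat.card β)
    (hle : Nat.card α ≤ Nat.card β) (hα : Nat.card α = 1 ∨ Nat.card α = Nat.card β) :
    strongDominationNumber (completeBipartiteSubdivide a₀ b₀) = 2 := by
  refine le_antisymm ?_
    (le_strongDominationNumber fun _ hD => hD.two_le_ncard (exists_ne_not_adj h))
  have hD : IsStrongDominatingSet (completeBipartiteSubdivide a₀ b₀)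
      {some (.inl a₀), some (.inr b₀)} := by
    rintro (_ | a | b) hx
    · refine ⟨some (.inl a₀), by simp, by simp, ?_⟩
      rw [sdeg_none, sdeg_inl]
      omega
    · have ha : a ≠ a₀ := by rintro rfl; simp at hx
      have : 1 < Nat.card α := Finite.one_lt_card_iff_nontrivial.mpr ⟨a, a₀, ha⟩
      refine ⟨some (.inr b₀), by simp, by simp [ha], ?_⟩
      rw [sdeg_inl, sdeg_inr]
      omega
    · have hb : b ≠ b₀ := by rintro rfl; simp at hx
      refine ⟨some (.inl a₀), by simp, by simp [hb], ?_⟩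
      rw [sdeg_inl, sdeg_inr]
      exact hle
  exact (strongDominationNumber_le_ncard hD).trans_eq (Set.ncard_pair (by simp))

theorem strongDominationNumber_eq_card (hα : 2 ≤ Nat.card α) (h : Nat.card α < Nat.card β) :
    strongDominationNumber (completeBipartiteSubdivide a₀ b₀) = Nat.card α := by
  have : Nontrivial α := Finite.one_lt_card_iff_nontrivial.mp hα
  obtain ⟨a₁, ha₁⟩ := exists_ne a₀
  have hinj : Function.Injective (some ∘ Sum.inl : α → Option (α ⊕ β)) :=
    (Option.some_injective _).comp Sum.inl_injective
  refine le_antisymm ?_ (le_strongDominationNumber fun D hD => ?_)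
  · have hD : IsStrongDominatingSet (completeBipartiteSubdivide a₀ b₀)
        (Set.range (some ∘ Sum.inl)) := by
      rintro (_ | a | b) hx
      · refine ⟨some (.inl a₀), Set.mem_range_self a₀, by simp, ?_⟩
        rw [sdeg_none, sdeg_inl]
        omega
      · exact absurd (Set.mem_range_self a) hx
      · refine ⟨some (.inl a₁), Set.mem_range_self a₁, by simp [ha₁], ?_⟩
        rw [sdeg_inl, sdeg_inr]
        exact h.le
    exact (strongDominationNumber_le_ncard hD).trans_eq (Set.ncard_range_of_injective hinj)
  · have hforced : Set.range (some ∘ Sum.inl) ⊆ D := by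
      rintro _ ⟨a, rfl⟩
      refine hD.mem_of_forall_adj_sdeg_lt fun y hy => ?_
      rcases y with _ | a' | b
      · rw [sdeg_none, Function.comp_apply, sdeg_inl]
        omega
      · simp at hy
      · rw [Function.comp_apply, sdeg_inl, sdeg_inr]
        exact h
    exact (Set.ncard_range_of_injective hinj).symm.trans_le (Set.ncard_le_ncard hforced)

end completeBipartiteSubdivide

theorem strongDominationNumber_completeBipartiteDeleteEdge_eq_subdivide_of_card_le
    (hle : Nat.card α ≤ Nat.card β) (h : 3 ≤ Nat.card α + Nat.card β) :
    strongDominationNumber (completeBipartiteDeleteEdge a₀ b₀) =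
      strongDominationNumber (completeBipartiteSubdivide a₀ b₀) := by
  have hα : 1 ≤ Nat.card α := Nat.card_pos_iff.mpr ⟨⟨a₀⟩, inferInstance⟩
  rcases hle.lt_or_eq with hlt | heq
  · rcases hα.lt_or_eq with hα | hα
    · rw [completeBipartiteDeleteEdge.strongDominationNumber_eq_card hα hlt,
        completeBipartiteSubdivide.strongDominationNumber_eq_card hα hlt]
    · rw [completeBipartiteDeleteEdge.strongDominationNumber_eq_two_of_card_eq_one hα.symm
        (by omega), completeBipartiteSubdivide.strongDominationNumber_eq_two h hle (.inl hα.symm)]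
  · rw [completeBipartiteDeleteEdge.strongDominationNumber_eq_two_of_card_eq heq (by omega),
      completeBipartiteSubdivide.strongDominationNumber_eq_two h hle (.inr heq)]

theorem strongDominationNumber_completeBipartiteDeleteEdge_eq_subdivide
    (h : 3 ≤ Nat.card α + Nat.card β) :
    strongDominationNumber (completeBipartiteDeleteEdge a₀ b₀) =
      strongDominationNumber (completeBipartiteSubdivide a₀ b₀) := by
  rcases le_total (Nat.card α) (Nat.card β) with hle | hle
  · exact strongDominationNumber_completeBipartiteDeleteEdge_eq_subdivide_of_card_le hle h
  · rw [completeBipartiteDeleteEdge.swapIso.strongDominationNumber_eq,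
      completeBipartiteSubdivide.swapIso.strongDominationNumber_eq]
    exact strongDominationNumber_completeBipartiteDeleteEdge_eq_subdivide_of_card_le hle (by omega)

end DominationNumber

theorem strongDominationNumber_completeBipartite_deleteEdge_eq_subdivide_general
    (m n : ℕ) (hmn : 3 ≤ m + n)
    (u v : Fin m ⊕ Fin n) (huv : (completeBipartiteGraph (Fin m) (Fin n)).Adj u v) :
    strongDominationNumber
        ((completeBipartiteGraph (Fin m) (Fin n)).deleteEdges {s(u, v)}) =
      strongDominationNumber (subdivide (completeBipartiteGraph (Fin m) (Fin n)) u v) := by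
  have hcard : 3 ≤ Nat.card (Fin m) + Nat.card (Fin n) := by simpa using hmn
  rcases u with a | b <;> rcases v with a' | b'
  · simp at huv
  · exact strongDominationNumber_completeBipartiteDeleteEdge_eq_subdivide hcard
  · rw [Sym2.eq_swap, subdivide_comm]
    exact strongDominationNumber_completeBipartiteDeleteEdge_eq_subdivide hcard
  · simp at huv

/-- For `m, n ≥ 1` with `m + n ≥ 3` and any edge `e` of `K_{m,n}`,
`γst(K_{m,n} - e) = γst((K_{m,n})_e)`. -/
theorem strongDominationNumber_completeBipartite_deleteEdge_eq_subdivide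
    (m n : ℕ) (hm : 1 ≤ m) (hn : 1 ≤ n) (hmn : 3 ≤ m + n)
    (u v : Fin m ⊕ Fin n) (huv : (completeBipartiteGraph (Fin m) (Fin n)).Adj u v) :
    strongDominationNumber
        ((completeBipartiteGraph (Fin m) (Fin n)).deleteEdges {s(u, v)}) =
      strongDominationNumber (subdivide (completeBipartiteGraph (Fin m) (Fin n)) u v) :=
  strongDominationNumber_completeBipartite_deleteEdge_eq_subdivide_general m n hmn u v huv
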